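/- arXiv:1612.08065 — 6 statements merged into one kernel-verified Lean document; each statement's English description precedes it below -/
import Mathlib

section
/- Let E be an invertible r×r complex matrix, H = E⁻¹Eᵀ, p ≥ 1, and a ∈ ℂʳ a vector with Hᵖa = a and such that for all integers k, aᵀEHᵏa = [k ≡ 0 (mod p)] + [k ≡ 1 (mod p)]. Define L = 1 − Σ_{k=1}^{p} Hᵏ a aᵀ E H⁻ᵏ. Then L commutes with H and satisfies (L − 1)(L + H⁻¹) = 0. -/
/-!
Write `Pₖ = Hᵏa · aᵀEH⁻ᵏ`, so that `L = 1 - S` with `S = ∑ₖ Pₖ`. Since `H = E⁻¹Eᵀ` satisfies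
`HᵀE = EH⁻¹`, the row vector `aᵀEH⁻ᵏ` equals `(Hᵏa)ᵀE`, hence `Pₖ` only depends on `k mod p`.
Conjugation by `H` sends `Pₖ` to `Pₖ₊₁`, so it permutes the summands of `S` cyclically and
`S` commutes with `H`. Moreover `PⱼPₖ = (aᵀEHᵏ⁻ʲa) · Hʲa aᵀEH⁻ᵏ`, and the pairing vanishes
unless `k ≡ j` or `k ≡ j + 1`; so `PⱼS = Pⱼ + PⱼH⁻¹`, whence `S² = S + SH⁻¹`, which is
`(L - 1)(L + H⁻¹) = 0`.
-/

namespace Function.Periodic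

variable {M : Type*} {p : ℕ} [NeZero p] {f : ℤ → M}

theorem apply_zmod_val (hf : Periodic f p) (k : ℤ) : f ((k : ZMod p).val : ℤ) = f k := by
  rw [ZMod.val_intCast]
  conv_rhs => rw [← Int.emod_add_mul_ediv k p, mul_comm]
  exact (hf.zsmul (k / p) (k % p)).symm

variable [AddCommMonoid M]

theorem sum_Icc_one_eq_sum_zmod (hf : Periodic f p) :
    ∑ k ∈ Finset.Icc 1 p, f k = ∑ x : ZMod p, f x.val := by
  obtain ⟨m, rfl⟩ := Nat.exists_eq_add_one_of_ne_zero (NeZero.ne p)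
  have hrange : ∑ k ∈ Finset.range m, f (k + 1 : ℕ) = ∑ k ∈ Finset.Icc 1 m, f k := by
    rw [Finset.range_eq_Ico, Finset.sum_Ico_add' (fun k : ℕ => f k), zero_add,
      Finset.Ico_add_one_right_eq_Icc]
  rw [Finset.sum_Icc_succ_top (by omega), hf.eq, ← hrange, ← Nat.cast_zero,
    ← Finset.sum_range_succ' (fun k : ℕ => f k)]
  -- `ZMod (m + 1)` is `Fin (m + 1)` by definition
  exact (Fin.sum_univ_eq_sum_range (fun k : ℕ => f k) _).symm

theorem sum_Icc_one_comp_add_one (hf : Periodic f p) :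
    ∑ k ∈ Finset.Icc 1 p, f (k + 1) = ∑ k ∈ Finset.Icc 1 p, f k := by
  have hshift (x : ZMod p) : f (x.val + 1) = f (x + 1).val := by
    rw [← hf.apply_zmod_val]
    push_cast
    rw [ZMod.natCast_zmod_val]
  rw [(hf.add_const 1).sum_Icc_one_eq_sum_zmod, hf.sum_Icc_one_eq_sum_zmod]
  simp only [hshift]
  exact Equiv.sum_comp (Equiv.addRight (1 : ZMod p)) (fun x => f x.val)

theorem sum_Icc_one_ite_intCast_eq (hf : Periodic f p) (j : ℤ) :
    ∑ k ∈ Finset.Icc 1 p, (if ((k : ℤ) : ZMod p) = j then f k else 0) = f j := by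
  have hg : Periodic (fun i : ℤ => if (i : ZMod p) = j then f i else 0) p := fun i => by
    simp only [Int.cast_add, Int.cast_natCast, ZMod.natCast_self, add_zero, hf i]
  rw [hg.sum_Icc_one_eq_sum_zmod]
  simp only [Int.cast_natCast, ZMod.natCast_zmod_val, Finset.sum_ite_eq', Finset.mem_univ, if_true]
  exact hf.apply_zmod_val j

variable {R : Type*} [Semiring R] [Module R M]

theorem sum_Icc_one_ite_sub_add_ite_sub_smul (hf : Periodic f p) (j : ℤ) :
    ∑ k ∈ Finset.Icc 1 p, ((if ((k - j : ℤ) : ZMod p) = 0 then 1 else 0) +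
      (if ((k - j : ℤ) : ZMod p) = 1 then 1 else 0) : R) • f k = f j + f (j + 1) := by
  have hsucc : (1 : ZMod p) + j = ((j + 1 : ℤ) : ZMod p) := by push_cast; ring
  simp only [add_smul, ite_smul, one_smul, zero_smul, Finset.sum_add_distrib, Int.cast_sub,
    sub_eq_iff_eq_add, zero_add, hsucc, hf.sum_Icc_one_ite_intCast_eq]

end Function.Periodic

namespace Matrix

variable {n R : Type*} [Fintype n] [DecidableEq n] [CommRing R]

theorem isUnit_det_inv_mul_transpose {E : Matrix n n R} (hE : IsUnit E.det) :
    IsUnit (E⁻¹ * Eᵀ).det := by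
  rw [det_mul, det_transpose]
  exact (isUnit_nonsing_inv_det E hE).mul hE

theorem transpose_inv_mul_transpose_mul {E : Matrix n n R} (hE : IsUnit E.det) :
    (E⁻¹ * Eᵀ)ᵀ * E = E * (E⁻¹ * Eᵀ)⁻¹ := by
  rw [transpose_mul, transpose_transpose, transpose_nonsing_inv, mul_inv_rev,
    nonsing_inv_nonsing_inv E hE, Matrix.mul_assoc]

variable {E H : Matrix n n R} {a : n → R} {p : ℕ}

theorem transpose_zpow_mul (hH : IsUnit H.det) (hHE : Hᵀ * E = E * H⁻¹) (k : ℤ) :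
    (H ^ k)ᵀ * E = E * H ^ (-k) := by
  have hconj := SemiconjBy.zpow_right (isUnit_nonsing_inv_det H hH)
    (by rwa [det_transpose]) hHE.symm k
  rw [transpose_zpow, ← inv_zpow' hH]
  exact hconj.eq.symm

theorem vecMul_mul_zpow_neg (hH : IsUnit H.det) (hHE : Hᵀ * E = E * H⁻¹) (k : ℤ) :
    a ᵥ* (E * H ^ (-k)) = (H ^ k *ᵥ a) ᵥ* E := by
  rw [← transpose_zpow_mul hH hHE, ← vecMul_vecMul, vecMul_transpose]

theorem periodic_zpow_mulVec (hH : IsUnit H.det) (ha : H ^ (p : ℤ) *ᵥ a = a) :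
    Function.Periodic (fun k : ℤ => H ^ k *ᵥ a) p := fun k => by
  simp only [zpow_add hH, ← mulVec_mulVec, ha]

theorem periodic_vecMul_mul_zpow_neg (hH : IsUnit H.det) (hHE : Hᵀ * E = E * H⁻¹)
    (ha : H ^ (p : ℤ) *ᵥ a = a) : Function.Periodic (fun k : ℤ => a ᵥ* (E * H ^ (-k))) p :=
  fun k => by simp only [vecMul_mul_zpow_neg hH hHE, periodic_zpow_mulVec hH ha k]

noncomputable def orbitTerm (E H : Matrix n n R) (a : n → R) (k : ℤ) : Matrix n n R :=
  vecMulVec (H ^ k *ᵥ a) (a ᵥ* (E * H ^ (-k)))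

theorem periodic_orbitTerm (hH : IsUnit H.det) (hHE : Hᵀ * E = E * H⁻¹)
    (ha : H ^ (p : ℤ) *ᵥ a = a) : Function.Periodic (orbitTerm E H a) p := fun k =>
  congrArg₂ vecMulVec (periodic_zpow_mulVec hH ha k) (periodic_vecMul_mul_zpow_neg hH hHE ha k)

theorem mul_orbitTerm (hH : IsUnit H.det) (k : ℤ) :
    H * orbitTerm E H a k = orbitTerm E H a (k + 1) * H := by
  rw [orbitTerm, orbitTerm, mul_vecMulVec, vecMulVec_mul, mulVec_mulVec, vecMul_vecMul,
    Matrix.mul_assoc, ← zpow_one_add hH, ← zpow_add_one hH, add_comm 1 k, neg_add,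
    neg_add_cancel_right]

theorem orbitTerm_mul_inv (hH : IsUnit H.det) (k : ℤ) :
    orbitTerm E H a k * H⁻¹ = vecMulVec (H ^ k *ᵥ a) (a ᵥ* (E * H ^ (-(k + 1)))) := by
  rw [orbitTerm, vecMulVec_mul, vecMul_vecMul, Matrix.mul_assoc, ← zpow_sub_one hH, neg_add',
    sub_eq_add_neg]

theorem orbitTerm_mul_orbitTerm (hH : IsUnit H.det) (j k : ℤ) :
    orbitTerm E H a j * orbitTerm E H a k =
      (a ⬝ᵥ E *ᵥ (H ^ (k - j) *ᵥ a)) • vecMulVec (H ^ j *ᵥ a) (a ᵥ* (E * H ^ (-k))) := by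
  rw [orbitTerm, orbitTerm, vecMulVec_mul_vecMulVec, vecMulVec_smul, ← dotProduct_mulVec,
    mulVec_mulVec, mulVec_mulVec, Matrix.mul_assoc, ← zpow_add hH, neg_add_eq_sub]

variable [NeZero p]

theorem commute_sum_orbitTerm (hH : IsUnit H.det) (hHE : Hᵀ * E = E * H⁻¹)
    (ha : H ^ (p : ℤ) *ᵥ a = a) : Commute H (∑ k ∈ Finset.Icc 1 p, orbitTerm E H a k) := by
  calc H * ∑ k ∈ Finset.Icc 1 p, orbitTerm E H a k
      = (∑ k ∈ Finset.Icc 1 p, orbitTerm E H a (k + 1)) * H := by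
        simp only [Finset.mul_sum, Finset.sum_mul, mul_orbitTerm hH]
    _ = (∑ k ∈ Finset.Icc 1 p, orbitTerm E H a k) * H := by
        rw [(periodic_orbitTerm hH hHE ha).sum_Icc_one_comp_add_one]

theorem sum_orbitTerm_mul_self (hH : IsUnit H.det) (hHE : Hᵀ * E = E * H⁻¹)
    (ha : H ^ (p : ℤ) *ᵥ a = a)
    (horth : ∀ k : ℤ, a ⬝ᵥ E *ᵥ (H ^ k *ᵥ a) =
      (if (k : ZMod p) = 0 then 1 else 0) + (if (k : ZMod p) = 1 then 1 else 0)) :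
    (∑ k ∈ Finset.Icc 1 p, orbitTerm E H a k) * ∑ k ∈ Finset.Icc 1 p, orbitTerm E H a k =
      ∑ k ∈ Finset.Icc 1 p, orbitTerm E H a k +
        (∑ k ∈ Finset.Icc 1 p, orbitTerm E H a k) * H⁻¹ := by
  have hrow (j : ℤ) : orbitTerm E H a j * ∑ k ∈ Finset.Icc 1 p, orbitTerm E H a k =
      orbitTerm E H a j + orbitTerm E H a j * H⁻¹ := by
    have hw : Function.Periodic
        (fun k : ℤ => vecMulVec (H ^ j *ᵥ a) (a ᵥ* (E * H ^ (-k)))) p :=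
      fun k => congrArg (vecMulVec _) (periodic_vecMul_mul_zpow_neg hH hHE ha k)
    simp only [Finset.mul_sum, orbitTerm_mul_orbitTerm hH, horth]
    rw [hw.sum_Icc_one_ite_sub_add_ite_sub_smul j, orbitTerm_mul_inv hH, orbitTerm]
  simp only [Finset.sum_mul _ _ (∑ k ∈ Finset.Icc 1 p, _), hrow]
  rw [Finset.sum_add_distrib, Finset.sum_mul]

end Matrix

open Matrix

/-- Let `E` be an invertible complex matrix, `H = E⁻¹Eᵀ`, and `a` the charge vector of a
spherical orbit of period `p`: `Hᵖa = a` and `aᵀEHᵏa = [k ≡ 0 (p)] + [k ≡ 1 (p)]`.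
Then the telescopic matrix `L = 1 - ∑_{k=1}^{p} Hᵏ a aᵀ E H⁻ᵏ` commutes with `H`
and satisfies `(L - 1)(L + H⁻¹) = 0`. -/
theorem telescopic_commutes_and_quadratic (r p : ℕ) (hp : 1 ≤ p)
    (E : Matrix (Fin r) (Fin r) ℂ) (hE : IsUnit E.det)
    (H : Matrix (Fin r) (Fin r) ℂ) (hH : H = E⁻¹ * Eᵀ)
    (a : Fin r → ℂ)
    (ha : (H ^ (p : ℤ)).mulVec a = a)
    (horth : ∀ k : ℤ, a ⬝ᵥ E.mulVec ((H ^ k).mulVec a) =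
      (if (k : ZMod p) = 0 then 1 else 0) + (if (k : ZMod p) = 1 then 1 else 0))
    (L : Matrix (Fin r) (Fin r) ℂ)
    (hL : L = 1 - ∑ k ∈ Finset.Icc 1 p,
      vecMulVec ((H ^ (k : ℤ)).mulVec a) (vecMul a (E * H ^ (-(k : ℤ))))) :
    L * H = H * L ∧ (L - 1) * (L + H⁻¹) = 0 := by
  have : NeZero p := ⟨by omega⟩
  have hHdet : IsUnit H.det := hH ▸ isUnit_det_inv_mul_transpose hE
  have hHE : Hᵀ * E = E * H⁻¹ := hH ▸ transpose_inv_mul_transpose_mul hE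
  set S := ∑ k ∈ Finset.Icc 1 p, orbitTerm E H a k
  have hLS : L = 1 - S := hL
  have hcomm : H * S = S * H := commute_sum_orbitTerm hHdet hHE ha
  have hsq : S * S = S + S * H⁻¹ := sum_orbitTerm_mul_self hHdet hHE ha horth
  subst hLS
  constructor
  · rw [sub_mul, mul_sub, hcomm, one_mul, mul_one]
  · calc (1 - S - 1) * (1 - S + H⁻¹) = S * S - (S + S * H⁻¹) := by noncomm_ring
      _ = 0 := by rw [hsq, sub_self]
end

section
/- Let E be an invertible r×r complex matrix, H = E⁻¹Eᵀ, p ≥ 1, and a ∈ ℂʳ with Hᵖa = a and aᵀEHᵏa = [k ≡ 0 (mod p)] + [k ≡ 1 (mod p)] for all k ∈ ℤ. Define L = 1 − Σ_{k=1}^{p} Hᵏ a aᵀ E H⁻ᵏ and R = 1 − Σ_{k=1}^{p} Hᵏ a aᵀ E H^{1−k}. Then L·R = 1 and R·L = 1; in particular L is invertible. -/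
/-!
Write `u k = Hᵏ a` and `v m = aᵀ E Hᵐ`, so that `L = 1 - ∑ₖ u k ⊗ v (-k)` and
`R = 1 - ∑ₖ u k ⊗ v (1 - k)`, and `v m ⬝ u n = aᵀ E H^{m+n} a` is the indicator of
`m + n ∈ {0, 1}` modulo `p`. Since `H = E⁻¹Eᵀ` preserves the form `E` (`Hᵀ E H = E`), `Hᵖ a = a`
makes both `u` and `v` `p`-periodic, so the sums run over `ℤ/p`. There the products of two sums
of rank-one matrices collapse: with `T s = ∑ₓ u x ⊗ v (s - x)` one gets
`T s * T s' = T (s + s') + T (s + s' - 1)`, so `T 0 * T 1 = T 1 * T 0 = T 0 + T 1`, which is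
exactly `(1 - T 0)(1 - T 1) = (1 - T 1)(1 - T 0) = 1`.
-/

open Matrix Function

namespace Function.Periodic

variable {M : Type*} {f : ℤ → M} {p : ℕ}

theorem eq_of_intCast_eq (hf : Periodic f p) {m n : ℤ} (h : (m : ZMod p) = n) : f m = f n := by
  obtain ⟨c, hc⟩ := (ZMod.intCast_eq_intCast_iff_dvd_sub m n p).1 h
  rw [show n = m + c * p by linarith]
  simpa using (hf.int_mul c m).symm

theorem sum_Icc_eq_sum_zmod [AddCommMonoid M] [NeZero p] (hf : Periodic f p) :
    ∑ k ∈ Finset.Icc 1 p, f k = ∑ x : ZMod p, f x.val := by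
  obtain ⟨m, rfl⟩ := Nat.exists_eq_add_one_of_ne_zero (NeZero.ne p)
  rw [show ∑ x : ZMod (m + 1), f x.val = ∑ k ∈ Finset.range (m + 1), f k from
      Fin.sum_univ_eq_sum_range (fun k : ℕ => f k) _,
    Finset.sum_range_succ', ← Finset.Ico_add_one_right_eq_Icc, Finset.sum_Ico_eq_sum_range,
    Nat.add_sub_cancel, Finset.sum_range_succ, add_comm 1 m, hf.eq, Nat.cast_zero]
  simp only [add_comm 1]

end Function.Periodic

namespace Matrix

section Telescopic

variable {G n R : Type*} [AddCommGroup G] [Fintype G] [DecidableEq G] [Fintype n] [CommRing R]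

noncomputable def telescopicSum (U V : G → n → R) (s : G) : Matrix n n R :=
  ∑ x, vecMulVec (U x) (V (s - x))

variable {U V : G → n → R} {t : G}

theorem telescopicSum_mul_telescopicSum
    (hdot : ∀ x y, V x ⬝ᵥ U y = (if x + y = 0 then 1 else 0) + (if x + y = t then 1 else 0))
    (s s' : G) :
    telescopicSum U V s * telescopicSum U V s' =
      telescopicSum U V (s + s') + telescopicSum U V (s + s' - t) := by
  simp only [telescopicSum, Finset.sum_mul_sum, vecMulVec_mul_vecMulVec, hdot, add_smul,
    ite_smul, one_smul, zero_smul, vecMulVec_add, Finset.sum_add_distrib]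
  -- restricted to the left side, since `← eq_sub_iff_add_eq'` would also rewrite the goal itself
  conv_lhs => simp only [← eq_sub_iff_add_eq', apply_ite (vecMulVec _), vecMulVec_zero,
    Finset.sum_ite_eq', Finset.mem_univ, if_true]
  congr 1 <;> exact Finset.sum_congr rfl fun x _ => by congr 2; abel

theorem one_sub_telescopicSum_mul_eq_one [DecidableEq n]
    (hdot : ∀ x y, V x ⬝ᵥ U y = (if x + y = 0 then 1 else 0) + (if x + y = t then 1 else 0)) :
    (1 - telescopicSum U V 0) * (1 - telescopicSum U V t) = 1 ∧
      (1 - telescopicSum U V t) * (1 - telescopicSum U V 0) = 1 := by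
  have h₁ := telescopicSum_mul_telescopicSum hdot 0 t
  have h₂ := telescopicSum_mul_telescopicSum hdot t 0
  simp only [zero_add, add_zero, sub_self] at h₁ h₂
  constructor
  · simp only [sub_mul, mul_sub, one_mul, mul_one, h₁]; abel
  · simp only [sub_mul, mul_sub, one_mul, mul_one, h₂]; abel

end Telescopic

theorem sum_Icc_vecMulVec_eq_telescopicSum {n R : Type*} [CommRing R] {p : ℕ} [NeZero p]
    {u v : ℤ → n → R} (hu : Periodic u p) (hv : Periodic v p) (c : ℤ) :
    ∑ k ∈ Finset.Icc 1 p, vecMulVec (u k) (v (c - k)) =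
      telescopicSum (fun x : ZMod p => u x.val) (fun x => v x.val) c := by
  have hperiodic : Periodic (fun k => vecMulVec (u k) (v (c - k))) p := fun k => by
    simp only [hu k, sub_add_eq_sub_sub, hv.sub_eq]
  rw [hperiodic.sum_Icc_eq_sum_zmod, telescopicSum]
  exact Finset.sum_congr rfl fun x _ => by
    rw [hv.eq_of_intCast_eq (n := ((c - x : ZMod p).val : ℤ)) (by simp)]

variable {n R : Type*} [Fintype n] [CommRing R]

theorem transpose_mul_mul_eq_self_of_eq_inv_mul_transpose [DecidableEq n] {E H : Matrix n n R}
    (hE : IsUnit E.det) (hH : H = E⁻¹ * Eᵀ) : Hᵀ * E * H = E := by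
  rw [hH, transpose_mul, transpose_transpose, transpose_nonsing_inv]
  simp only [Matrix.mul_assoc]
  rw [mul_nonsing_inv_cancel_left _ _ hE, nonsing_inv_mul _ (by rwa [det_transpose]),
    Matrix.mul_one]

theorem transpose_pow_mul_mul_pow_eq_self [DecidableEq n] {E H : Matrix n n R}
    (hH : Hᵀ * E * H = E) (k : ℕ) :
    (H ^ k)ᵀ * E * H ^ k = E := by
  induction k with
  | zero => simp
  | succ k ih =>
    rw [pow_succ, transpose_mul, show Hᵀ * (H ^ k)ᵀ * E * (H ^ k * H) =
      Hᵀ * ((H ^ k)ᵀ * E * H ^ k) * H by simp only [Matrix.mul_assoc], ih, hH]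

theorem vecMul_mul_eq_of_transpose_mul_mul_eq {E K : Matrix n n R} {a : n → R}
    (hK : Kᵀ * E * K = E) (ha : K *ᵥ a = a) : a ᵥ* (E * K) = a ᵥ* E := by
  conv_rhs => rw [← hK, Matrix.mul_assoc, ← vecMul_vecMul, vecMul_transpose, ha]

end Matrix

/-- With the spherical-orbit data `(E, H = E⁻¹Eᵀ, a, p)`, the telescopic matrices
`L = 1 - ∑_{k=1}^{p} Hᵏ a aᵀ E H⁻ᵏ` and `R = 1 - ∑_{k=1}^{p} Hᵏ a aᵀ E H^{1-k}` are
mutually inverse: `L·R = 1` and `R·L = 1`; in particular `L` is invertible. -/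
theorem telescopic_inverse (r p : ℕ) (hp : 1 ≤ p)
    (E : Matrix (Fin r) (Fin r) ℂ) (hE : IsUnit E.det)
    (H : Matrix (Fin r) (Fin r) ℂ) (hH : H = E⁻¹ * Eᵀ)
    (a : Fin r → ℂ)
    (ha : (H ^ (p : ℤ)).mulVec a = a)
    (horth : ∀ k : ℤ, a ⬝ᵥ E.mulVec ((H ^ k).mulVec a) =
      (if (k : ZMod p) = 0 then 1 else 0) + (if (k : ZMod p) = 1 then 1 else 0))
    (L R : Matrix (Fin r) (Fin r) ℂ)
    (hL : L = 1 - ∑ k ∈ Finset.Icc 1 p,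
      vecMulVec ((H ^ (k : ℤ)).mulVec a) (vecMul a (E * H ^ (-(k : ℤ)))))
    (hR : R = 1 - ∑ k ∈ Finset.Icc 1 p,
      vecMulVec ((H ^ (k : ℤ)).mulVec a) (vecMul a (E * H ^ (1 - (k : ℤ))))) :
    L * R = 1 ∧ R * L = 1 ∧ IsUnit L := by
  have : NeZero p := ⟨by omega⟩
  have hHdet : IsUnit H.det := by
    rw [hH, det_mul]
    exact (isUnit_nonsing_inv_det E hE).mul (by rwa [det_transpose])
  have haE : a ᵥ* (E * H ^ (p : ℤ)) = a ᵥ* E := by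
    rw [zpow_natCast] at ha ⊢
    exact vecMul_mul_eq_of_transpose_mul_mul_eq (transpose_pow_mul_mul_pow_eq_self
      (transpose_mul_mul_eq_self_of_eq_inv_mul_transpose hE hH) p) ha
  set u : ℤ → Fin r → ℂ := fun k => H ^ k *ᵥ a
  set v : ℤ → Fin r → ℂ := fun m => a ᵥ* (E * H ^ m)
  have hu : Periodic u p := fun m => by
    simp only [u, zpow_add hHdet, ← mulVec_mulVec, ha]
  have hv : Periodic v p := fun m => by
    simp only [v]
    rw [add_comm, zpow_add hHdet, ← Matrix.mul_assoc, ← vecMul_vecMul, haE, vecMul_vecMul]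
  have hdot : ∀ x y : ZMod p, v x.val ⬝ᵥ u y.val =
      (if x + y = 0 then 1 else 0) + (if x + y = 1 then 1 else 0) := fun x y => by
    simpa [u, v, ← dotProduct_mulVec, mulVec_mulVec, Matrix.mul_assoc, ← zpow_add hHdet]
      using horth (x.val + y.val)
  have hL' : L = 1 - telescopicSum (fun x : ZMod p => u x.val) (fun x => v x.val) 0 := by
    rw [hL, ← Int.cast_zero (R := ZMod p), ← sum_Icc_vecMulVec_eq_telescopicSum hu hv 0]
    simp only [u, v, zero_sub]
  have hR' : R = 1 - telescopicSum (fun x : ZMod p => u x.val) (fun x => v x.val) 1 := by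
    rw [hR, ← Int.cast_one (R := ZMod p), ← sum_Icc_vecMulVec_eq_telescopicSum hu hv 1]
  obtain ⟨hLR, hRL⟩ := one_sub_telescopicSum_mul_eq_one hdot
  rw [hL', hR']
  exact ⟨hLR, hRL, .of_mul_eq_one _ hLR⟩
end

section
/- Let E be an invertible r×r complex matrix, H = E⁻¹Eᵀ, p ≥ 1, and a ∈ ℂʳ with Hᵖa = a and aᵀEHᵏa = [k ≡ 0 (mod p)] + [k ≡ 1 (mod p)]. Define L = 1 − Σ_{k=1}^{p} Hᵏ a aᵀ E H⁻ᵏ. Then for every x ∈ ℂʳ with Hx = x one has L²x = x, i.e. L restricts to an involution on the fixed space of H. -/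
/-!
On a vector `x` fixed by `H`, every functional `aᵀ E H⁻ᵏ` takes the value `c = aᵀ E x`, so
`L x = x - c s` with `s = ∑_{k=1}^{p} Hᵏ a`. The orthogonality relations say that
`aᵀ E H⁻ᵏ s` counts the `j ∈ [1, p]` with `j - k ≡ 0` or `j - k ≡ 1 (mod p)`, which is `2`.
Hence `L s = s - 2 s = -s`, and `L² x = L x - c L s = x`.
-/

open Matrix

lemma ZMod.sum_Icc_one_natCast {M : Type*} [AddCommMonoid M] (p : ℕ) [NeZero p]
    (f : ZMod p → M) : ∑ j ∈ Finset.Icc 1 p, f j = ∑ z : ZMod p, f z := by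
  refine Finset.sum_nbij' (fun j : ℕ ↦ (j : ZMod p)) (fun z ↦ (z - 1).val + 1)
    (fun _ _ ↦ Finset.mem_univ _) (fun z _ ↦ ?_) (fun j hj ↦ ?_) (fun z _ ↦ ?_) (fun _ _ ↦ rfl)
  · simpa [Nat.succ_le_iff] using ZMod.val_lt (z - 1)
  · obtain ⟨hj₁, hjp⟩ := Finset.mem_Icc.mp hj
    have hcast : ((j : ZMod p) - 1) = ((j - 1 : ℕ) : ZMod p) := by
      rw [Nat.cast_sub hj₁, Nat.cast_one]
    simp only [hcast, ZMod.val_cast_of_lt (show j - 1 < p by omega)]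
    omega
  · simp

theorem Matrix.zpow_mulVec_of_mulVec_eq_self {n R : Type*} [Fintype n] [DecidableEq n]
    [CommRing R] {A : Matrix n n R} (hA : IsUnit A.det) {x : n → R} (hx : A *ᵥ x = x)
    (k : ℤ) : A ^ k *ᵥ x = x := by
  have hinv : A⁻¹ *ᵥ x = x := by
    conv_lhs => rw [← hx]
    rw [mulVec_mulVec, nonsing_inv_mul _ hA, one_mulVec]
  induction k using Int.induction_on with
  | zero => simp
  | succ n ih => rw [zpow_add_one hA, ← mulVec_mulVec, hx, ih]
  | pred n ih => rw [zpow_sub_one hA, ← mulVec_mulVec, hinv, ih]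

noncomputable section Telescopic

variable {n R : Type*} [Fintype n] [DecidableEq n] [CommRing R]

def orbitSum (H : Matrix n n R) (a : n → R) (p : ℕ) : n → R :=
  ∑ k ∈ Finset.Icc 1 p, H ^ (k : ℤ) *ᵥ a

def telescopic (E H : Matrix n n R) (a : n → R) (p : ℕ) : Matrix n n R :=
  1 - ∑ k ∈ Finset.Icc 1 p, vecMulVec (H ^ (k : ℤ) *ᵥ a) (a ᵥ* (E * H ^ (-(k : ℤ))))

variable {E H : Matrix n n R} {a : n → R} {p : ℕ}

lemma telescopic_mulVec (v : n → R) :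
    telescopic E H a p *ᵥ v =
      v - ∑ k ∈ Finset.Icc 1 p, (a ᵥ* (E * H ^ (-(k : ℤ))) ⬝ᵥ v) • H ^ (k : ℤ) *ᵥ a := by
  simp only [telescopic, sub_mulVec, one_mulVec, sum_mulVec, vecMulVec_mulVec, op_smul_eq_smul]

lemma telescopic_mulVec_of_mulVec_eq_self (hH : IsUnit H.det) {x : n → R}
    (hx : H *ᵥ x = x) :
    telescopic E H a p *ᵥ x = x - (a ⬝ᵥ E *ᵥ x) • orbitSum H a p := by
  have hcoeff (k : ℕ) : a ᵥ* (E * H ^ (-(k : ℤ))) ⬝ᵥ x = a ⬝ᵥ E *ᵥ x := by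
    rw [← dotProduct_mulVec, ← mulVec_mulVec, zpow_mulVec_of_mulVec_eq_self hH hx]
  simp only [telescopic_mulVec, hcoeff, orbitSum, Finset.smul_sum]

lemma telescopic_mulVec_orbitSum [NeZero p] (hH : IsUnit H.det)
    (horth : ∀ k : ℤ, a ⬝ᵥ E *ᵥ (H ^ k *ᵥ a) =
      (if (k : ZMod p) = 0 then 1 else 0) + (if (k : ZMod p) = 1 then 1 else 0)) :
    telescopic E H a p *ᵥ orbitSum H a p = -orbitSum H a p := by
  have hcoeff (k : ℕ) : a ᵥ* (E * H ^ (-(k : ℤ))) ⬝ᵥ orbitSum H a p = 2 := by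
    have hterm (j : ℕ) : a ᵥ* (E * H ^ (-(k : ℤ))) ⬝ᵥ H ^ (j : ℤ) *ᵥ a =
        (if (j : ZMod p) = k then 1 else 0) + (if (j : ZMod p) = 1 + k then 1 else 0) := by
      rw [← dotProduct_mulVec, mulVec_mulVec, mul_assoc, ← zpow_add hH, ← mulVec_mulVec,
        neg_add_eq_sub, horth]
      push_cast
      simp only [sub_eq_iff_eq_add, zero_add]
    simp only [orbitSum, dotProduct_sum, hterm,
      ZMod.sum_Icc_one_natCast p
        (fun z ↦ (if z = k then (1 : R) else 0) + if z = 1 + k then 1 else 0),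
      Finset.sum_add_distrib, Finset.sum_ite_eq', Finset.mem_univ, if_true]
    norm_num
  rw [telescopic_mulVec]
  simp only [hcoeff, ← Finset.smul_sum]
  rw [two_smul, orbitSum]
  abel

end Telescopic

theorem telescopic_involution_on_flavor_general (r p : ℕ) (hp : 1 ≤ p)
    (E : Matrix (Fin r) (Fin r) ℂ) (hE : IsUnit E.det)
    (H : Matrix (Fin r) (Fin r) ℂ) (hH : H = E⁻¹ * Eᵀ)
    (a : Fin r → ℂ)
    (horth : ∀ k : ℤ, a ⬝ᵥ E.mulVec ((H ^ k).mulVec a) =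
      (if (k : ZMod p) = 0 then 1 else 0) + (if (k : ZMod p) = 1 then 1 else 0))
    (L : Matrix (Fin r) (Fin r) ℂ)
    (hL : L = 1 - ∑ k ∈ Finset.Icc 1 p,
      vecMulVec ((H ^ (k : ℤ)).mulVec a) (vecMul a (E * H ^ (-(k : ℤ))))) :
    ∀ x : Fin r → ℂ, H.mulVec x = x → (L * L).mulVec x = x := by
  intro x hx
  have : NeZero p := ⟨by omega⟩
  have hHdet : IsUnit H.det := by
    rw [hH, det_mul, det_transpose]
    exact (isUnit_nonsing_inv_det E hE).mul hE
  change L = telescopic E H a p at hL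
  rw [hL, ← mulVec_mulVec, telescopic_mulVec_of_mulVec_eq_self hHdet hx, mulVec_sub,
    mulVec_smul, telescopic_mulVec_of_mulVec_eq_self hHdet hx,
    telescopic_mulVec_orbitSum hHdet horth, smul_neg, sub_neg_eq_add, sub_add_cancel]

/-- With the spherical-orbit data `(E, H = E⁻¹Eᵀ, a, p)`, the telescopic matrix
`L = 1 - ∑_{k=1}^{p} Hᵏ a aᵀ E H⁻ᵏ` restricts to an involution on the fixed space
of `H`: for every `x` with `Hx = x` one has `L²x = x`. -/
theorem telescopic_involution_on_flavor (r p : ℕ) (hp : 1 ≤ p)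
    (E : Matrix (Fin r) (Fin r) ℂ) (hE : IsUnit E.det)
    (H : Matrix (Fin r) (Fin r) ℂ) (hH : H = E⁻¹ * Eᵀ)
    (a : Fin r → ℂ)
    (ha : (H ^ (p : ℤ)).mulVec a = a)
    (horth : ∀ k : ℤ, a ⬝ᵥ E.mulVec ((H ^ k).mulVec a) =
      (if (k : ZMod p) = 0 then 1 else 0) + (if (k : ZMod p) = 1 then 1 else 0))
    (L : Matrix (Fin r) (Fin r) ℂ)
    (hL : L = 1 - ∑ k ∈ Finset.Icc 1 p,
      vecMulVec ((H ^ (k : ℤ)).mulVec a) (vecMul a (E * H ^ (-(k : ℤ))))) :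
    ∀ x : Fin r → ℂ, H.mulVec x = x → (L * L).mulVec x = x :=
  telescopic_involution_on_flavor_general r p hp E hE H hH a horth L hL
end

section
/- Let E be an invertible r×r complex matrix, H = E⁻¹Eᵀ, p ≥ 1, and a ∈ ℂʳ with Hᵖa = a and aᵀEHᵏa = [k ≡ 0 (mod p)] + [k ≡ 1 (mod p)]. Define L = 1 − Σ_{k=1}^{p} Hᵏ a aᵀ E H⁻ᵏ and v = Σ_{k=1}^{p} Hᵏ a. Then: (i) aᵀEv = 2, so v ≠ 0; (ii) for every x with Hx = x, one has (1 − L)x = (aᵀEx)·v. Hence on the fixed space of H the map 1 − L has rank at most 1 with image contained in the line spanned by the nonzero vector v, i.e. L acts on the flavor space as a reflection. -/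
open Matrix

private lemma helper_mulVec_sum {r : ℕ} (M : Matrix (Fin r) (Fin r) ℂ) (s : Finset ℕ)
    (f : ℕ → Fin r → ℂ) : M.mulVec (∑ k ∈ s, f k) = ∑ k ∈ s, M.mulVec (f k) :=
  map_sum M.mulVecLin f s

private lemma helper_dot_sum {r : ℕ} (a : Fin r → ℂ) (s : Finset ℕ) (f : ℕ → Fin r → ℂ) :
    a ⬝ᵥ (∑ k ∈ s, f k) = ∑ k ∈ s, a ⬝ᵥ f k := by
  simp only [dotProduct, Finset.sum_apply, Finset.mul_sum]
  exact Finset.sum_comm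

private lemma helper_sum_mulVec {r : ℕ} (s : Finset ℕ) (M : ℕ → Matrix (Fin r) (Fin r) ℂ)
    (x : Fin r → ℂ) : (∑ k ∈ s, M k).mulVec x = ∑ k ∈ s, (M k).mulVec x := by
  ext i
  simp only [Matrix.mulVec, dotProduct, Matrix.sum_apply, Finset.sum_apply,
    Finset.sum_mul]
  exact Finset.sum_comm

/-- With the spherical-orbit data `(E, H = E⁻¹Eᵀ, a, p)` and `v = ∑_{k=1}^{p} Hᵏ a`:
(i) `aᵀEv = 2`, so `v ≠ 0`; (ii) for every `H`-fixed vector `x`,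
`(1 - L)x = (aᵀEx)·v`. Hence on the flavor space `1 - L` has rank ≤ 1 with image in
the line spanned by `v`, i.e. `L` acts as a reflection. -/
theorem telescopic_reflection_on_flavor (r p : ℕ) (hp : 1 ≤ p)
    (E : Matrix (Fin r) (Fin r) ℂ) (hE : IsUnit E.det)
    (H : Matrix (Fin r) (Fin r) ℂ) (hH : H = E⁻¹ * Eᵀ)
    (a : Fin r → ℂ)
    (ha : (H ^ (p : ℤ)).mulVec a = a)
    (horth : ∀ k : ℤ, a ⬝ᵥ E.mulVec ((H ^ k).mulVec a) =
      (if (k : ZMod p) = 0 then 1 else 0) + (if (k : ZMod p) = 1 then 1 else 0))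
    (L : Matrix (Fin r) (Fin r) ℂ)
    (hL : L = 1 - ∑ k ∈ Finset.Icc 1 p,
      vecMulVec ((H ^ (k : ℤ)).mulVec a) (vecMul a (E * H ^ (-(k : ℤ)))))
    (v : Fin r → ℂ)
    (hv : v = ∑ k ∈ Finset.Icc 1 p, (H ^ (k : ℤ)).mulVec a) :
    a ⬝ᵥ E.mulVec v = 2 ∧ v ≠ 0 ∧
      ∀ x : Fin r → ℂ, H.mulVec x = x → (1 - L).mulVec x = (a ⬝ᵥ E.mulVec x) • v := by
  have hHu : IsUnit H.det := by
    rw [hH, Matrix.det_mul, Matrix.det_transpose, Matrix.det_nonsing_inv,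
      Ring.inverse_mul_cancel _ hE]
    exact isUnit_one
  -- fixed vectors are fixed by all integer powers
  have hfix : ∀ x : Fin r → ℂ, H.mulVec x = x → ∀ n : ℤ, (H ^ n).mulVec x = x := by
    intro x hx
    have hnat : ∀ n : ℕ, (H ^ n).mulVec x = x := by
      intro n
      induction n with
      | zero => simp
      | succ m ih => rw [pow_succ, ← Matrix.mulVec_mulVec, hx, ih]
    intro n
    cases n with
    | ofNat m => simpa using hnat m
    | negSucc m =>
      rw [zpow_negSucc]
      have h1 : (H ^ (m + 1)).mulVec x = x := hnat (m + 1)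
      have hdet : IsUnit (H ^ (m + 1)).det := by
        rw [Matrix.det_pow]; exact hHu.pow _
      calc (H ^ (m + 1))⁻¹.mulVec x
          = (H ^ (m + 1))⁻¹.mulVec ((H ^ (m + 1)).mulVec x) := by rw [h1]
        _ = ((H ^ (m + 1))⁻¹ * H ^ (m + 1)).mulVec x := by rw [Matrix.mulVec_mulVec]
        _ = x := by rw [Matrix.nonsing_inv_mul _ hdet, Matrix.one_mulVec]
  -- part (i)
  have h1 : a ⬝ᵥ E.mulVec v = 2 := by
    rw [hv, helper_mulVec_sum, helper_dot_sum]
    have hrw : ∀ k ∈ Finset.Icc 1 p, a ⬝ᵥ E.mulVec ((H ^ (k : ℤ)).mulVec a) =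
        (if ((k : ℕ) : ZMod p) = 0 then (1:ℂ) else 0) +
        (if ((k : ℕ) : ZMod p) = 1 then (1:ℂ) else 0) := by
      intro k _
      rw [horth (k : ℤ)]
      push_cast
      ring
    rw [Finset.sum_congr rfl hrw, Finset.sum_add_distrib]
    have hs1 : (∑ k ∈ Finset.Icc 1 p, if ((k : ℕ) : ZMod p) = 0 then (1:ℂ) else 0) = 1 := by
      rw [Finset.sum_eq_single p]
      · simp
      · intro k hk hkp
        rw [Finset.mem_Icc] at hk
        have hklt : k < p := lt_of_le_of_ne hk.2 hkp
        have : ¬ ((k : ZMod p) = 0) := by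
          rw [ZMod.natCast_eq_zero_iff]
          intro hdvd
          exact absurd (Nat.le_of_dvd (by omega) hdvd) (by omega)
        simp [this]
      · intro hmem
        exact absurd (Finset.mem_Icc.mpr ⟨hp, le_refl p⟩) hmem
    have hs2 : (∑ k ∈ Finset.Icc 1 p, if ((k : ℕ) : ZMod p) = 1 then (1:ℂ) else 0) = 1 := by
      rw [Finset.sum_eq_single 1]
      · simp
      · intro k hk hk1
        rw [Finset.mem_Icc] at hk
        have hk2 : 2 ≤ k := by omega
        have hp2 : 2 ≤ p := le_trans hk2 hk.2
        have : ¬ ((k : ZMod p) = 1) := by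
          intro h
          have : ((k - 1 : ℕ) : ZMod p) = 0 := by
            have : ((k - 1 : ℕ) : ZMod p) = (k : ZMod p) - 1 := by
              have : k - 1 + 1 = k := by omega
              calc ((k - 1 : ℕ) : ZMod p) = ((k - 1 : ℕ) : ZMod p) + 1 - 1 := by ring
                _ = (((k - 1) + 1 : ℕ) : ZMod p) - 1 := by push_cast; ring
                _ = (k : ZMod p) - 1 := by rw [this]
            rw [this, h, sub_self]
          rw [ZMod.natCast_eq_zero_iff] at this
          have := Nat.le_of_dvd (by omega) this
          omega
        simp [this]
      · intro hmem
        exact absurd (Finset.mem_Icc.mpr ⟨le_refl 1, hp⟩) hmem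
    rw [hs1, hs2]; norm_num
  refine ⟨h1, ?_, ?_⟩
  · intro hv0
    rw [hv0] at h1
    simp at h1
  · intro x hx
    have hsub : (1 : Matrix (Fin r) (Fin r) ℂ) - L = ∑ k ∈ Finset.Icc 1 p,
        vecMulVec ((H ^ (k : ℤ)).mulVec a) (vecMul a (E * H ^ (-(k : ℤ)))) := by
      rw [hL, sub_sub_cancel]
    rw [hsub, helper_sum_mulVec, hv, Finset.smul_sum]
    refine Finset.sum_congr rfl fun k _ => ?_
    have hterm : (vecMulVec ((H ^ (k : ℤ)).mulVec a)
        (vecMul a (E * H ^ (-(k : ℤ))))).mulVec x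
        = ((vecMul a (E * H ^ (-(k : ℤ)))) ⬝ᵥ x) • ((H ^ (k : ℤ)).mulVec a) := by
      ext i
      simp only [Matrix.mulVec, Matrix.vecMulVec_apply, dotProduct, Pi.smul_apply,
        smul_eq_mul]
      rw [Finset.sum_mul]
      exact Finset.sum_congr rfl fun j _ => by ring
    rw [hterm]
    congr 1
    rw [← Matrix.dotProduct_mulVec, ← Matrix.mulVec_mulVec, hfix x hx]
end

section
/- Let E be an invertible r×r complex matrix, H = E⁻¹Eᵀ, p ≥ 1, and a ∈ ℂʳ with Hᵖa = a and aᵀEHᵏa = [k ≡ 0 (mod p)] + [k ≡ 1 (mod p)]. Let ζ ∈ ℂ satisfy ζᵖ = 1 and ζ ≠ −1, and set v_ζ = Σ_{k=1}^{p} ζ⁻ᵏ Hᵏ a. Then: (i) H·v_ζ = ζ·v_ζ; (ii) aᵀE·v_ζ = 1 + ζ⁻¹ ≠ 0, so v_ζ ≠ 0; (iii) with L = 1 − Σ_{k=1}^{p} Hᵏ a aᵀ E H⁻ᵏ one has L·v_ζ = −ζ⁻¹·v_ζ. In particular, every p-th root of unity other than −1 is an eigenvalue of H. -/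
open Matrix

private lemma sum_mulVec' {r : ℕ} {ι : Type*} (s : Finset ι)
    (M : ι → Matrix (Fin r) (Fin r) ℂ) (v : Fin r → ℂ) :
    (∑ k ∈ s, M k).mulVec v = ∑ k ∈ s, (M k).mulVec v := by
  induction s using Finset.cons_induction with
  | empty => simp
  | cons i s hi ih => simp [Finset.sum_cons, Matrix.add_mulVec, ih]

private lemma mulVec_sum' {r : ℕ} {ι : Type*} (s : Finset ι)
    (M : Matrix (Fin r) (Fin r) ℂ) (v : ι → Fin r → ℂ) :
    M.mulVec (∑ k ∈ s, v k) = ∑ k ∈ s, M.mulVec (v k) := by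
  induction s using Finset.cons_induction with
  | empty => simp
  | cons i s hi ih => simp [Finset.sum_cons, Matrix.mulVec_add, ih]

private lemma dot_sum' {r : ℕ} {ι : Type*} (s : Finset ι)
    (v : Fin r → ℂ) (w : ι → Fin r → ℂ) :
    v ⬝ᵥ (∑ k ∈ s, w k) = ∑ k ∈ s, v ⬝ᵥ w k := by
  induction s using Finset.cons_induction with
  | empty => simp
  | cons i s hi ih => simp [Finset.sum_cons, dotProduct_add, ih]

private lemma vecMulVec_mulVec' {r : ℕ} (u w v : Fin r → ℂ) :
    (vecMulVec u w).mulVec v = (w ⬝ᵥ v) • u := by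
  ext i
  simp only [Matrix.mulVec, dotProduct, vecMulVec_apply, Pi.smul_apply, smul_eq_mul,
    Finset.sum_mul]
  exact Finset.sum_congr rfl fun j _ => by ring

private lemma sum_shift {M : Type*} [AddCommMonoid M] (p : ℕ) (hp : 1 ≤ p)
    (g : ℕ → M) (hg : g (p + 1) = g 1) :
    ∑ k ∈ Finset.Icc 1 p, g (k + 1) = ∑ k ∈ Finset.Icc 1 p, g k := by
  have h1 : ∑ k ∈ Finset.Icc 1 p, g (k + 1) = ∑ k ∈ Finset.Icc 2 (p + 1), g k := by
    rw [← Finset.map_add_right_Icc 1 p 1, Finset.sum_map]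
    rfl
  rw [h1, Finset.sum_Icc_succ_top (by omega : 2 ≤ p + 1), hg,
    show Finset.Icc 2 p = Finset.Ioc 1 p from Finset.Icc_add_one_left_eq_Ioc 1 p,
    ← Finset.Ioc_insert_left hp, Finset.sum_insert Finset.left_notMem_Ioc]
  exact add_comm _ _

/-- With the spherical-orbit data `(E, H = E⁻¹Eᵀ, a, p)`, let `ζ` be a `p`-th root of
unity with `ζ ≠ -1`, and `v_ζ = ∑_{k=1}^{p} ζ⁻ᵏ Hᵏ a`. Then (i) `H v_ζ = ζ v_ζ`;
(ii) `aᵀE v_ζ = 1 + ζ⁻¹ ≠ 0`, so `v_ζ ≠ 0`; (iii) `L v_ζ = -ζ⁻¹ v_ζ` for the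
telescopic matrix `L`. In particular every `p`-th root of unity other than `-1`
is an eigenvalue of `H`. -/
theorem telescopic_eigenvector (r p : ℕ) (hp : 1 ≤ p)
    (E : Matrix (Fin r) (Fin r) ℂ) (hE : IsUnit E.det)
    (H : Matrix (Fin r) (Fin r) ℂ) (hH : H = E⁻¹ * Eᵀ)
    (a : Fin r → ℂ)
    (ha : (H ^ (p : ℤ)).mulVec a = a)
    (horth : ∀ k : ℤ, a ⬝ᵥ E.mulVec ((H ^ k).mulVec a) =
      (if (k : ZMod p) = 0 then 1 else 0) + (if (k : ZMod p) = 1 then 1 else 0))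
    (L : Matrix (Fin r) (Fin r) ℂ)
    (hL : L = 1 - ∑ k ∈ Finset.Icc 1 p,
      vecMulVec ((H ^ (k : ℤ)).mulVec a) (vecMul a (E * H ^ (-(k : ℤ)))))
    (ζ : ℂ) (hζp : ζ ^ p = 1) (hζ : ζ ≠ -1)
    (vζ : Fin r → ℂ)
    (hvζ : vζ = ∑ k ∈ Finset.Icc 1 p, (ζ⁻¹ ^ k) • (H ^ (k : ℤ)).mulVec a) :
    H.mulVec vζ = ζ • vζ ∧
    a ⬝ᵥ E.mulVec vζ = 1 + ζ⁻¹ ∧ (1 + ζ⁻¹ ≠ 0) ∧ vζ ≠ 0 ∧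
    L.mulVec vζ = (-ζ⁻¹) • vζ := by
  haveI : NeZero p := ⟨by omega⟩
  have hζ0 : ζ ≠ 0 := by
    intro h
    rw [h, zero_pow (by omega : p ≠ 0)] at hζp
    exact zero_ne_one hζp
  have hinvp : ζ⁻¹ ^ p = 1 := by rw [inv_pow, hζp, inv_one]
  have hζζ : ζ * ζ⁻¹ = 1 := mul_inv_cancel₀ hζ0
  have hHdet : IsUnit H.det := by
    rw [hH, Matrix.det_mul, Matrix.det_transpose]
    exact (Matrix.isUnit_nonsing_inv_det E hE).mul hE
  have hper : (H ^ ((p : ℤ) + 1)).mulVec a = H.mulVec a := by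
    rw [add_comm, Matrix.zpow_add hHdet, zpow_one, ← Matrix.mulVec_mulVec, ha]
  have hstep : ∀ k : ℕ,
      H.mulVec ((H ^ (k : ℤ)).mulVec a) = (H ^ ((k + 1 : ℕ) : ℤ)).mulVec a := by
    intro k
    have hc : ((k + 1 : ℕ) : ℤ) = 1 + (k : ℤ) := by push_cast; ring
    rw [Matrix.mulVec_mulVec, hc, Matrix.zpow_add hHdet, zpow_one]
  have hfp : (H ^ ((p + 1 : ℕ) : ℤ)).mulVec a = (H ^ ((1 : ℕ) : ℤ)).mulVec a := by
    have hc : ((p + 1 : ℕ) : ℤ) = (p : ℤ) + 1 := by push_cast; ring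
    rw [hc, hper]
    simp
  -- part (i)
  have part1 : H.mulVec vζ = ζ • vζ := by
    rw [hvζ, mulVec_sum']
    have hterm : ∀ k : ℕ,
        H.mulVec (ζ⁻¹ ^ k • (H ^ (k : ℤ)).mulVec a)
          = (fun k : ℕ => (ζ * ζ⁻¹ ^ k) • (H ^ (k : ℤ)).mulVec a) (k + 1) := by
      intro k
      rw [Matrix.mulVec_smul, hstep]
      show ζ⁻¹ ^ k • _ = (ζ * ζ⁻¹ ^ (k + 1)) • _
      congr 1
      rw [pow_succ, mul_comm (ζ⁻¹ ^ k), ← mul_assoc, hζζ, one_mul]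
    have hg1 : (fun k : ℕ => (ζ * ζ⁻¹ ^ k) • (H ^ (k : ℤ)).mulVec a) (p + 1)
        = (fun k : ℕ => (ζ * ζ⁻¹ ^ k) • (H ^ (k : ℤ)).mulVec a) 1 := by
      show (ζ * ζ⁻¹ ^ (p + 1)) • _ = (ζ * ζ⁻¹ ^ 1) • _
      rw [hfp, pow_succ, hinvp, one_mul, pow_one]
    calc ∑ k ∈ Finset.Icc 1 p, H.mulVec (ζ⁻¹ ^ k • (H ^ (k : ℤ)).mulVec a)
        = ∑ k ∈ Finset.Icc 1 p,
            (fun k : ℕ => (ζ * ζ⁻¹ ^ k) • (H ^ (k : ℤ)).mulVec a) (k + 1) :=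
          Finset.sum_congr rfl fun k _ => hterm k
      _ = ∑ k ∈ Finset.Icc 1 p, (ζ * ζ⁻¹ ^ k) • (H ^ (k : ℤ)).mulVec a :=
          sum_shift p hp (fun k : ℕ => (ζ * ζ⁻¹ ^ k) • (H ^ (k : ℤ)).mulVec a) hg1
      _ = ζ • ∑ k ∈ Finset.Icc 1 p, ζ⁻¹ ^ k • (H ^ (k : ℤ)).mulVec a := by
          rw [Finset.smul_sum]
          exact Finset.sum_congr rfl fun k _ => (smul_smul ζ _ _).symm
  -- part (ii)
  have c0 : ∀ k : ℕ, 1 ≤ k → k ≤ p → (((k : ℕ) : ZMod p) = 0 ↔ k = p) := by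
    intro k h1 h2
    rw [ZMod.natCast_eq_zero_iff]
    constructor
    · intro h
      exact le_antisymm h2 (Nat.le_of_dvd (by omega) h)
    · rintro rfl
      exact dvd_rfl
  have c1 : ∀ k : ℕ, 1 ≤ k → k ≤ p → (((k : ℕ) : ZMod p) = 1 ↔ k = 1) := by
    intro k h1 h2
    constructor
    · intro h
      have h' : ((k : ℕ) : ZMod p) = ((1 : ℕ) : ZMod p) := by simpa using h
      rw [ZMod.natCast_eq_natCast_iff] at h'
      have hd : p ∣ k - 1 := (Nat.modEq_iff_dvd' h1).mp h'.symm
      have := Nat.eq_zero_of_dvd_of_lt hd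
      omega
    · rintro rfl
      simp
  have part2 : a ⬝ᵥ E.mulVec vζ = 1 + ζ⁻¹ := by
    rw [hvζ, mulVec_sum', dot_sum']
    have hterm : ∀ k ∈ Finset.Icc 1 p,
        a ⬝ᵥ E.mulVec (ζ⁻¹ ^ k • (H ^ (k : ℤ)).mulVec a)
          = (if k = p then ζ⁻¹ ^ k else 0) + (if k = 1 then ζ⁻¹ ^ k else 0) := by
      intro k hk
      rw [Finset.mem_Icc] at hk
      rw [Matrix.mulVec_smul, dotProduct_smul, smul_eq_mul, horth (k : ℤ)]
      have e0 : (((k : ℤ)) : ZMod p) = ((k : ℕ) : ZMod p) := by push_cast; rfl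
      rw [e0, mul_add, mul_ite, mul_ite, mul_one, mul_zero]
      simp only [c0 k hk.1 hk.2, c1 k hk.1 hk.2]
    rw [Finset.sum_congr rfl hterm, Finset.sum_add_distrib,
      Finset.sum_ite_eq' _ p (fun k => ζ⁻¹ ^ k), Finset.sum_ite_eq' _ 1 (fun k => ζ⁻¹ ^ k)]
    rw [if_pos (Finset.mem_Icc.mpr ⟨hp, le_refl p⟩),
      if_pos (Finset.mem_Icc.mpr ⟨le_refl 1, hp⟩), hinvp, pow_one]
  have hne : (1 : ℂ) + ζ⁻¹ ≠ 0 := by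
    intro h
    apply hζ
    have h1 : ζ⁻¹ = -1 := by linear_combination h
    rw [← inv_inv ζ, h1]
    norm_num
  have hvne : vζ ≠ 0 := by
    intro h0
    rw [h0] at part2
    simp only [Matrix.mulVec_zero, dotProduct_zero] at part2
    exact hne part2.symm
  -- part (iii)
  have hinvvec : H⁻¹.mulVec vζ = ζ⁻¹ • vζ := by
    have h2 : H⁻¹.mulVec (H.mulVec vζ) = vζ := by
      rw [Matrix.mulVec_mulVec, Matrix.nonsing_inv_mul H hHdet, Matrix.one_mulVec]
    rw [part1, Matrix.mulVec_smul] at h2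
    calc H⁻¹.mulVec vζ = ζ⁻¹ • (ζ • H⁻¹.mulVec vζ) := by
          rw [smul_smul, inv_mul_cancel₀ hζ0, one_smul]
      _ = ζ⁻¹ • vζ := by rw [h2]
  have hpowinv' : ∀ k : ℕ, (H⁻¹ ^ k).mulVec vζ = ζ⁻¹ ^ k • vζ := by
    intro k
    induction k with
    | zero => simp
    | succ n ih =>
        rw [pow_succ, ← Matrix.mulVec_mulVec, hinvvec, Matrix.mulVec_smul, ih,
          smul_smul, ← pow_succ']
  have hpowinv : ∀ k : ℕ, (H ^ (-(k : ℤ))).mulVec vζ = ζ⁻¹ ^ k • vζ := by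
    intro k
    rw [Matrix.zpow_neg hHdet, zpow_natCast, ← Matrix.inv_pow']
    exact hpowinv' k
  have part5 : L.mulVec vζ = (-ζ⁻¹) • vζ := by
    rw [hL, Matrix.sub_mulVec, Matrix.one_mulVec, sum_mulVec']
    have hterm : ∀ k ∈ Finset.Icc 1 p,
        (vecMulVec ((H ^ (k : ℤ)).mulVec a) (vecMul a (E * H ^ (-(k : ℤ))))).mulVec vζ
          = (1 + ζ⁻¹) • ζ⁻¹ ^ k • (H ^ (k : ℤ)).mulVec a := by
      intro k _
      rw [vecMulVec_mulVec']
      have hsc : vecMul a (E * H ^ (-(k : ℤ))) ⬝ᵥ vζ = ζ⁻¹ ^ k * (1 + ζ⁻¹) := by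
        rw [← Matrix.dotProduct_mulVec, ← Matrix.mulVec_mulVec, hpowinv,
          Matrix.mulVec_smul, dotProduct_smul, smul_eq_mul, part2]
      rw [hsc, smul_smul]
      congr 1
      ring
    rw [Finset.sum_congr rfl hterm, ← Finset.smul_sum, ← hvζ]
    ext i
    simp only [Pi.sub_apply, Pi.smul_apply, smul_eq_mul, Pi.neg_apply]
    ring
  exact ⟨part1, part2, hne, hvne, part5⟩
end

section
/- Let E be an invertible r×r complex matrix, H = E⁻¹Eᵀ. If there exists p ≥ 1 and a vector a ∈ ℂʳ with Hᵖa = a and aᵀEHᵏa = [k ≡ 0 (mod p)] + [k ≡ 1 (mod p)] for all k, then p ≤ r + 1. (Indeed the p − 1 distinct p-th roots of unity different from −1 are all eigenvalues of the r×r matrix H.) -/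
open Matrix

/-- dot product with a fixed vector on the left, as a linear map. -/
private noncomputable def dotL {r : ℕ} (a : Fin r → ℂ) : (Fin r → ℂ) →ₗ[ℂ] ℂ where
  toFun w := a ⬝ᵥ w
  map_add' u v := dotProduct_add a u v
  map_smul' x w := dotProduct_smul x a w

/-- If the monodromy `H = E⁻¹Eᵀ` of an invertible `r × r` complex matrix `E` admits a
spherical-orbit charge vector of period `p` (i.e. `Hᵖa = a` and
`aᵀEHᵏa = [k ≡ 0 (p)] + [k ≡ 1 (p)]` for all `k`), then `p ≤ r + 1`. -/
theorem spherical_period_le (r p : ℕ) (hp : 1 ≤ p)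
    (E : Matrix (Fin r) (Fin r) ℂ) (hE : IsUnit E.det)
    (H : Matrix (Fin r) (Fin r) ℂ) (hH : H = E⁻¹ * Eᵀ)
    (h : ∃ a : Fin r → ℂ, (H ^ (p : ℤ)).mulVec a = a ∧
      ∀ k : ℤ, a ⬝ᵥ E.mulVec ((H ^ k).mulVec a) =
        (if (k : ZMod p) = 0 then 1 else 0) + (if (k : ZMod p) = 1 then 1 else 0)) :
    p ≤ r + 1 := by
  by_contra hle
  push_neg at hle
  haveI : NeZero p := ⟨by omega⟩
  obtain ⟨a, -, ha⟩ := h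
  have hHu : IsUnit H.det := by
    rw [hH, Matrix.det_mul, Matrix.det_transpose]
    exact (E.isUnit_nonsing_inv_det hE).mul hE
  set v : Fin (r + 1) → (Fin r → ℂ) := fun j => (H ^ (j : ℤ)).mulVec a with hv
  have hnli : ¬ LinearIndependent ℂ v := by
    intro hli
    have := hli.fintype_card_le_finrank
    simp [Module.finrank_fintype_fun_eq_card] at this
  obtain ⟨c, hsum, j0, hj0⟩ := Fintype.not_linearIndependent_iff.mp hnli
  -- the key relation
  have key : ∀ k : ℤ, ∑ j : Fin (r + 1), c j *
      ((if ((k + j : ℤ) : ZMod p) = 0 then 1 else 0) +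
       (if ((k + j : ℤ) : ZMod p) = 1 then 1 else 0)) = 0 := by
    intro k
    set L := (dotL a).comp ((E.mulVecLin).comp ((H ^ k).mulVecLin)) with hLdef
    have hL : ∀ w : Fin r → ℂ, L w = a ⬝ᵥ E.mulVec ((H ^ k).mulVec w) := by
      intro w; simp [hLdef, dotL, Matrix.mulVecLin_apply]
    have h0 : ∑ j : Fin (r + 1), L (c j • v j) = 0 := by
      rw [← map_sum, hsum]; exact map_zero L
    refine Eq.trans (Finset.sum_congr rfl fun j _ => ?_) h0
    rw [_root_.map_smul, hL, smul_eq_mul]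
    congr 1
    rw [show v j = (H ^ (j : ℤ)).mulVec a from rfl,
      show (H ^ k).mulVec ((H ^ (j : ℤ)).mulVec a) = (H ^ (k + (j : ℤ))).mulVec a from by
        rw [Matrix.mulVec_mulVec, ← Matrix.zpow_add hHu]]
    exact (ha (k + (j : ℤ))).symm
  -- residue sums
  set d : ZMod p → ℂ := fun t => ∑ j : Fin (r + 1), if ((j : ℕ) : ZMod p) = t then c j else 0
    with hd
  have hrec : ∀ t : ZMod p, d t + d (t + 1) = 0 := by
    intro t
    have hcast : ∀ j : Fin (r + 1), ((-(t.val : ℤ) + (j : ℤ) : ℤ) : ZMod p)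
        = -t + ((j : ℕ) : ZMod p) := by
      intro j
      push_cast
      rw [ZMod.natCast_val, ZMod.cast_id]
    rw [hd]
    simp only []
    rw [← Finset.sum_add_distrib]
    refine Eq.trans (Finset.sum_congr rfl fun j _ => ?_) (key (-(t.val : ℤ)))
    rw [hcast j, mul_add, mul_ite, mul_one, mul_zero, mul_ite, mul_one, mul_zero]
    congr 1 <;>
      [refine (if_congr ?_ rfl rfl).symm; refine (if_congr ?_ rfl rfl).symm] <;>
      (constructor <;> intro h' <;> linear_combination h')
  -- injectivity of residues on [0, r+1]
  have hinj : ∀ m n : ℕ, m < p → n < p → ((m : ZMod p) = (n : ZMod p)) → m = n := by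
    intro m n hm hn hmn
    have := congrArg ZMod.val hmn
    rwa [ZMod.val_natCast_of_lt hm, ZMod.val_natCast_of_lt hn] at this
  -- the unhit residue
  have hbase : d ((r + 1 : ℕ) : ZMod p) = 0 := by
    rw [hd]
    refine Finset.sum_eq_zero fun j _ => ?_
    rw [if_neg]
    intro hc
    have := hinj (j : ℕ) (r + 1) (by omega) (by omega) hc
    omega
  -- propagate zero around the cycle
  have hall : ∀ n : ℕ, d (((r + 1 : ℕ) : ZMod p) + n) = 0 := by
    intro n
    induction n with
    | zero => simpa using hbase
    | succ n ih =>
      have h2 := hrec (((r + 1 : ℕ) : ZMod p) + n)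
      rw [ih, zero_add] at h2
      rw [show (((r + 1 : ℕ) : ZMod p) + (n + 1 : ℕ)) = ((r + 1 : ℕ) : ZMod p) + n + 1 by
        push_cast; ring]
      exact h2
  have hdzero : ∀ t : ZMod p, d t = 0 := by
    intro t
    have := hall ((t - ((r + 1 : ℕ) : ZMod p)).val)
    rwa [ZMod.natCast_val, ZMod.cast_id, add_sub_cancel] at this
  -- conclude c j0 = 0
  have : c j0 = 0 := by
    have h3 : (∑ j : Fin (r + 1), if ((j : ℕ) : ZMod p) = ((j0 : ℕ) : ZMod p) then c j else 0)
        = 0 := hdzero (((j0 : ℕ) : ZMod p))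
    rw [Finset.sum_eq_single j0 (fun j _ hne => ?_) (by simp)] at h3
    · rwa [if_pos rfl] at h3
    · rw [if_neg]
      intro hc
      exact hne (Fin.ext (hinj (j : ℕ) (j0 : ℕ) (by omega) (by omega) hc))
  exact hj0 this
end
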